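/- Let w = (w_0, …, w_{T−1}) be a real-valued vector and let Ĥ = ∑_i w_i Ĥ_i. Then w lies in the null space of the quantum correlation matrix M (i.e., Mw = 0) if and only if the unit vector v is an eigenvector of Ĥ. -/

import Mathlib

lemma inner_real_smul_right' {V : Type*} [NormedAddCommGroup V] [InnerProductSpace ℂ V]
    (x y : V) (r : ℝ) : (inner ℂ x (r • y) : ℂ) = (r : ℂ) * (inner ℂ x y : ℂ) := by
  rw [RCLike.real_smul_eq_coe_smul (K := ℂ), inner_smul_right]; rfl

/-- The quantum correlation matrix (QCM) of a family of operators `H` on a complex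
inner product space with respect to a vector `v`:
`M i j = ½⟨v, (HᵢHⱼ + HⱼHᵢ) v⟩ − ⟨v, Hᵢ v⟩⟨v, Hⱼ v⟩`. -/
noncomputable def QCM {V : Type*} [NormedAddCommGroup V] [InnerProductSpace ℂ V]
    {T : ℕ} (H : Fin T → V →ₗ[ℂ] V) (v : V) : Matrix (Fin T) (Fin T) ℂ :=
  fun i j => (1 / 2 : ℂ) * (inner ℂ v ((H i) ((H j) v) + (H j) ((H i) v)) : ℂ) -
    (inner ℂ v ((H i) v) : ℂ) * (inner ℂ v ((H j) v) : ℂ)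

/-- A real vector `w` lies in the null space of the QCM (`M w = 0`) if and only if
the unit vector `v` is an eigenvector of the Hermitian operator `Ĥ = ∑ i, wᵢ • Hᵢ`. -/
theorem qcm_nullspace_iff_eigenvector {V : Type*} [NormedAddCommGroup V]
    [InnerProductSpace ℂ V] [FiniteDimensional ℂ V] {T : ℕ}
    (H : Fin T → V →ₗ[ℂ] V) (hH : ∀ i, (H i).IsSymmetric) (v : V) (hv : ‖v‖ = 1)
    (w : Fin T → ℝ) :
    (QCM H v).mulVec (fun j => (w j : ℂ)) = 0 ↔
      ∃ α : ℂ, (∑ i, (w i : ℂ) • H i) v = α • v := by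
  classical
  set A : V →ₗ[ℂ] V := ∑ i, (w i : ℂ) • H i with hAdef
  have hA : A.IsSymmetric := by
    intro x y
    simp only [hAdef, LinearMap.sum_apply, LinearMap.smul_apply, sum_inner, inner_sum,
      inner_smul_left, inner_smul_right, Complex.conj_ofReal]
    exact Finset.sum_congr rfl fun i _ => by rw [hH i x y]
  have hvv : (inner ℂ v v : ℂ) = 1 := by
    rw [inner_self_eq_norm_sq_to_K, hv]; norm_num
  have hAv : A v = ∑ i, (w i : ℂ) • (H i v) := by
    simp [hAdef, LinearMap.sum_apply]
  have key : ∀ i, (QCM H v).mulVec (fun j => (w j : ℂ)) i =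
      (1/2 : ℂ) * ((inner ℂ v (H i (A v)) : ℂ) + (inner ℂ v (A (H i v)) : ℂ)) -
      (inner ℂ v (H i v) : ℂ) * (inner ℂ v (A v) : ℂ) := by
    intro i
    have h1 : (inner ℂ v (H i (A v)) : ℂ) = ∑ j, (w j : ℂ) * (inner ℂ v (H i (H j v)) : ℂ) := by
      rw [hAv, map_sum]
      simp [inner_sum, inner_smul_right, inner_real_smul_right', map_smul]
    have h2 : (inner ℂ v (A (H i v)) : ℂ) = ∑ j, (w j : ℂ) * (inner ℂ v (H j (H i v)) : ℂ) := by
      simp [hAdef, LinearMap.sum_apply, inner_sum, inner_smul_right, inner_real_smul_right']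
    have h3 : (inner ℂ v (A v) : ℂ) = ∑ j, (w j : ℂ) * (inner ℂ v (H j v) : ℂ) := by
      rw [hAv]; simp [inner_sum, inner_smul_right, inner_real_smul_right']
    rw [h1, h2, h3]
    simp only [Matrix.mulVec, dotProduct, QCM, inner_add_right, Finset.mul_sum,
      ← Finset.sum_add_distrib, ← Finset.sum_sub_distrib]
    exact Finset.sum_congr rfl fun j _ => by ring
  have hconj : (starRingEnd ℂ) (inner ℂ v (A v) : ℂ) = (inner ℂ v (A v) : ℂ) := by
    exact (inner_conj_symm (A v) v).trans (hA v v)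
  constructor
  · intro h
    set μ : ℂ := (inner ℂ v (A v) : ℂ) with hμdef
    have hsum : (0 : ℂ) = (inner ℂ v (A (A v)) : ℂ) - μ * μ := by
      have e0 : ∀ u : V, ∑ i, (w i : ℂ) * (inner ℂ v (H i u) : ℂ) = (inner ℂ v (A u) : ℂ) := by
        intro u
        conv_rhs => rw [hAdef]
        simp [LinearMap.sum_apply, inner_sum, inner_smul_right, inner_real_smul_right']
      have e1 : ∑ i, (w i : ℂ) * (inner ℂ v (H i (A v)) : ℂ) = (inner ℂ v (A (A v)) : ℂ) := e0 (A v)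
      have e2 : ∑ i, (w i : ℂ) * (inner ℂ v (A (H i v)) : ℂ) = (inner ℂ v (A (A v)) : ℂ) := by
        conv_rhs => rw [hAv]
        rw [map_sum]
        simp [inner_sum, inner_smul_right, inner_real_smul_right', map_smul]
      have e3 : ∑ i, (w i : ℂ) * (inner ℂ v (H i v) : ℂ) = μ := by rw [hμdef, e0 v]
      calc (0 : ℂ) = ∑ i, (w i : ℂ) * (QCM H v).mulVec (fun j => (w j : ℂ)) i := by
            simp [h]
        _ = ∑ i, ((1/2 : ℂ) * ((w i : ℂ) * (inner ℂ v (H i (A v)) : ℂ)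
              + (w i : ℂ) * (inner ℂ v (A (H i v)) : ℂ))
              - ((w i : ℂ) * (inner ℂ v (H i v) : ℂ)) * μ) := by
            refine Finset.sum_congr rfl fun i _ => ?_
            rw [key i]; ring
        _ = (inner ℂ v (A (A v)) : ℂ) - μ * μ := by
            rw [Finset.sum_sub_distrib, ← Finset.sum_mul, e3]
            rw [show (∑ i, (1/2 : ℂ) * ((w i : ℂ) * (inner ℂ v (H i (A v)) : ℂ)
              + (w i : ℂ) * (inner ℂ v (A (H i v)) : ℂ)))
              = (1/2 : ℂ) * ((∑ i, (w i : ℂ) * (inner ℂ v (H i (A v)) : ℂ))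
                + ∑ i, (w i : ℂ) * (inner ℂ v (A (H i v)) : ℂ)) by
              rw [mul_add, Finset.mul_sum, Finset.mul_sum, ← Finset.sum_add_distrib]
              exact Finset.sum_congr rfl fun i _ => by ring]
            rw [e1, e2]; ring
    have hAvv : (inner ℂ (A v) v : ℂ) = μ := hA v v
    have hAA : (inner ℂ v (A (A v)) : ℂ) = (inner ℂ (A v) (A v) : ℂ) := (hA v (A v)).symm
    have hzero : (inner ℂ (A v - μ • v) (A v - μ • v) : ℂ) = 0 := by
      simp only [inner_sub_left, inner_sub_right, inner_smul_left, inner_smul_right,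
        hvv, hAvv, hconj, mul_one]
      rw [← hAA, ← hsum]
      ring
    refine ⟨μ, ?_⟩
    have := inner_self_eq_zero.mp hzero
    rw [sub_eq_zero] at this
    exact this
  · rintro ⟨α, hα⟩
    have hμα : (inner ℂ v (A v) : ℂ) = α := by
      rw [hα, inner_smul_right, hvv, mul_one]
    have hαconj : (starRingEnd ℂ) α = α := by rw [← hμα]; exact hconj
    funext i
    have h1 : (inner ℂ v (H i (A v)) : ℂ) = α * (inner ℂ v (H i v) : ℂ) := by
      rw [hα, map_smul, inner_smul_right]
    have h2 : (inner ℂ v (A (H i v)) : ℂ) = α * (inner ℂ v (H i v) : ℂ) := by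
      rw [← hA v (H i v), hα, inner_smul_left, hαconj]
    rw [key i, h1, h2, hμα]
    simp only [Pi.zero_apply]
    ring
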